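/- arXiv:1409.8064 — 2 statements merged into one kernel-verified Lean document; each statement's English description precedes it below -/
import Mathlib

section
/- Let G be an infinite group, I a proper translation invariant ideal on G, A a subset of G, and F a finite subset of G. If FA =_I G, then F·Δ_I(A) = G. -/
open Pointwise

/-- A family of subsets of `G` is an ideal if it is closed under taking subsets
and finite unions. -/
def IsSetIdeal {G : Type*} (I : Set (Set G)) : Prop :=
  (∀ s t : Set G, s ⊆ t → t ∈ I → s ∈ I) ∧ (∀ s ∈ I, ∀ t ∈ I, s ∪ t ∈ I)

/-- A family of subsets of `G` is translation invariant if it is closed under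
left translation. -/
def IsTransInv {G : Type*} [Group G] (I : Set (Set G)) : Prop :=
  ∀ s ∈ I, ∀ g : G, g • s ∈ I

/-- `A =_I B` iff the symmetric difference `A △ B` belongs to `I`. -/
def IdealEq {G : Type*} (I : Set (Set G)) (A B : Set G) : Prop :=
  symmDiff A B ∈ I

/-- `A` is `I`-large if `FA =_I G` for some finite `F ⊆ G`. -/
def ILarge {G : Type*} [Group G] (I : Set (Set G)) (A : Set G) : Prop :=
  ∃ F : Set G, F.Finite ∧ IdealEq I (F * A) Set.univ

/-- `A` is `I`-small if `(G \ A) ∩ L` is `I`-large for every `I`-large `L ⊆ G`. -/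
def ISmall {G : Type*} [Group G] (I : Set (Set G)) (A : Set G) : Prop :=
  ∀ L : Set G, ILarge I L → ILarge I ((Set.univ \ A) ∩ L)

/-- The combinatorial derivation relative to `I`:
`Δ_I(A) = {g ∈ G : gA ∩ A ∉ I}`. -/
def combDerivI {G : Type*} [Group G] (I : Set (Set G)) (A : Set G) : Set G :=
  {g : G | (g • A) ∩ A ∉ I}

/-! Since `(FA)ᶜ ∈ I`, any set outside `I` still meets `FA` in a set outside `I`. This applies
to `gA`, because `A ∉ I` (otherwise `G = FA ∪ (FA)ᶜ ∈ I`). As `FA = ⋃_{f ∈ F} fA` is a finite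
union, some `gA ∩ fA ∉ I`, and translating by `f⁻¹` puts `f⁻¹g` in `Δ_I(A)`. -/

open Set

section Ideal

variable {G : Type*} {I : Set (Set G)}

theorem idealEq_univ_iff {B : Set G} : IdealEq I B univ ↔ Bᶜ ∈ I := by
  rw [IdealEq, ← top_eq_univ, symmDiff_top, hnot_eq_compl]

namespace IsSetIdeal

variable (hI : IsSetIdeal I)
include hI

theorem mem_of_subset_union {s t u : Set G} (hs : s ⊆ t ∪ u) (ht : t ∈ I) (hu : u ∈ I) :
    s ∈ I :=
  hI.1 s _ hs (hI.2 t ht u hu)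

theorem inter_notMem_of_compl_mem {S B : Set G} (hS : S ∉ I) (hB : Bᶜ ∈ I) : S ∩ B ∉ I :=
  fun hSB => hS <| hI.mem_of_subset_union (fun x hx => by by_cases h : x ∈ B <;> simp_all) hSB hB

theorem biUnion_mem {ι : Type*} {S : Set ι} {f : ι → Set G} (h0 : ∅ ∈ I) (hS : S.Finite)
    (hf : ∀ i ∈ S, f i ∈ I) : ⋃ i ∈ S, f i ∈ I := by
  induction S, hS using Set.Finite.induction_on with
  | empty => simpa using h0
  | @insert a s _ _ ih =>
    rw [biUnion_insert]
    exact hI.2 _ (hf a (mem_insert a s)) _ (ih fun i hi => hf i (mem_insert_of_mem a hi))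

end IsSetIdeal

end Ideal

section Group

variable {G : Type*} [Group G] {I : Set (Set G)}

theorem IsTransInv.smul_mem_iff (hT : IsTransInv I) {g : G} {s : Set G} : g • s ∈ I ↔ s ∈ I :=
  ⟨fun h => by simpa using hT _ h g⁻¹, fun h => hT s h g⟩

theorem IsSetIdeal.mul_mem (hI : IsSetIdeal I) (hT : IsTransInv I) (h0 : ∅ ∈ I) {F A : Set G}
    (hF : F.Finite) (hA : A ∈ I) : F * A ∈ I := by
  rw [← iUnion_mul_left_image]
  exact hI.biUnion_mem h0 hF fun f _ => hT A hA f

theorem inv_mul_mem_combDerivI (hT : IsTransInv I) {A : Set G} {f g : G}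
    (h : g • A ∩ f • A ∉ I) : f⁻¹ * g ∈ combDerivI I A := by
  rwa [combDerivI, mem_ofPred_eq, ← hT.smul_mem_iff (g := f), smul_set_inter, smul_smul,
    mul_inv_cancel_left]

end Group

theorem mul_combDerivI_eq_univ_general {G : Type*} [Group G]
    (I : Set (Set G)) (hIdeal : IsSetIdeal I) (hTrans : IsTransInv I)
    (hProper : Set.univ ∉ I) (A F : Set G) (hF : F.Finite)
    (hFA : IdealEq I (F * A) Set.univ) :
    F * combDerivI I A = Set.univ := by
  rw [idealEq_univ_iff] at hFA
  have h0 : ∅ ∈ I := hIdeal.1 _ _ (empty_subset _) hFA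
  have hA : A ∉ I := fun hA =>
    hIdeal.inter_notMem_of_compl_mem hProper hFA (by simpa using hIdeal.mul_mem hTrans h0 hF hA)
  refine eq_univ_of_forall fun g => ?_
  have hgFA : g • A ∩ (F * A) ∉ I :=
    hIdeal.inter_notMem_of_compl_mem (hTrans.smul_mem_iff.not.2 hA) hFA
  rw [← iUnion_mul_left_image, inter_iUnion₂] at hgFA
  obtain ⟨f, hf, hgf⟩ : ∃ f ∈ F, g • A ∩ f • A ∉ I := by
    by_contra! h
    exact hgFA (hIdeal.biUnion_mem h0 hF h)
  exact ⟨f, hf, f⁻¹ * g, inv_mul_mem_combDerivI hTrans hgf, mul_inv_cancel_left f g⟩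

/-- If `FA =_I G` then `F • Δ_I(A) = G`. -/
theorem mul_combDerivI_eq_univ {G : Type*} [Group G] [Infinite G]
    (I : Set (Set G)) (hIdeal : IsSetIdeal I) (hTrans : IsTransInv I)
    (hProper : Set.univ ∉ I) (A F : Set G) (hF : F.Finite)
    (hFA : IdealEq I (F * A) Set.univ) :
    F * combDerivI I A = Set.univ :=
  mul_combDerivI_eq_univ_general I hIdeal hTrans hProper A F hF hFA
end

section
/- Let G be an infinite group and I* a proper translation invariant ideal on G that is maximal with respect to inclusion among all proper translation invariant ideals on G. Then every I*-small subset of G belongs to I*; consequently the power set of G is partitioned into I* and the family of I*-large sets. -/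
open Pointwise

/-!
For `A ∉ I*`, the sets covered by `FA ∪ B` with `F` finite and `B ∈ I*` form a
translation invariant ideal containing `I*` and `A`, so by maximality it is improper, i.e.
`FA ∪ B = G` for some such `F`, `B`, which says that `A` is `I*`-large. Conversely members of a
proper translation invariant ideal are never large, because `I` contains all `FA` with `A ∈ I`.
An `I*`-small set `A ∉ I*` would then be large, hence `(G \ A) ∩ A = ∅` would be large.
-/

def IsProperTransInvIdeal {G : Type*} [Group G] (I : Set (Set G)) : Prop :=
  IsSetIdeal I ∧ IsTransInv I ∧ Set.univ ∉ I

def IsMaximalTransInvIdeal {G : Type*} [Group G] (I : Set (Set G)) : Prop :=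
  IsProperTransInvIdeal I ∧ ∀ J, IsProperTransInvIdeal J → I ⊆ J → J = I

section

variable {G : Type*} {I : Set (Set G)}

theorem IsSetIdeal.insert_empty (hI : IsSetIdeal I) : IsSetIdeal (insert ∅ I) := by
  refine ⟨?_, ?_⟩
  · rintro s t hst (rfl | ht)
    · exact .inl (Set.subset_empty_iff.mp hst)
    · exact .inr (hI.1 s t hst ht)
  · rintro s (rfl | hs) t (rfl | ht)
    · simp
    · simpa using .inr ht
    · simpa using .inr hs
    · exact .inr (hI.2 s hs t ht)

variable [Group G]

theorem iLarge_iff {A : Set G} : ILarge I A ↔ ∃ F : Set G, F.Finite ∧ (F * A)ᶜ ∈ I := by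
  simp only [ILarge, IdealEq, ← Set.top_eq_univ, symmDiff_top]
  rfl

theorem IsTransInv.insert_empty (hI : IsTransInv I) : IsTransInv (insert ∅ I) := by
  rintro s (rfl | hs) g
  · simp
  · exact .inr (hI s hs g)

theorem IsProperTransInvIdeal.isSetIdeal (hI : IsProperTransInvIdeal I) : IsSetIdeal I := hI.1

theorem IsProperTransInvIdeal.isTransInv (hI : IsProperTransInvIdeal I) : IsTransInv I := hI.2.1

theorem IsProperTransInvIdeal.univ_notMem (hI : IsProperTransInvIdeal I) : Set.univ ∉ I := hI.2.2

theorem IsProperTransInvIdeal.insert_empty (hI : IsProperTransInvIdeal I) :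
    IsProperTransInvIdeal (insert ∅ I) :=
  ⟨hI.isSetIdeal.insert_empty, hI.isTransInv.insert_empty, by
    rintro (h | h)
    · exact Set.univ_nonempty.ne_empty h
    · exact hI.univ_notMem h⟩

theorem IsMaximalTransInvIdeal.empty_mem (hI : IsMaximalTransInvIdeal I) : ∅ ∈ I :=
  hI.2 _ hI.1.insert_empty (Set.subset_insert _ _) ▸ Set.mem_insert _ _

theorem IsSetIdeal.finite_mul_mem (hI : IsSetIdeal I) (hT : IsTransInv I) {F A : Set G}
    (hF : F.Finite) (hA : A ∈ I) : F * A ∈ I := by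
  induction F, hF using Set.Finite.induction_on with
  | empty => simpa using hI.1 ∅ A (Set.empty_subset A) hA
  | @insert a F _ _ ih =>
    rw [Set.insert_eq, Set.union_mul, Set.singleton_mul]
    exact hI.2 _ (hT A hA a) _ ih

theorem IsProperTransInvIdeal.not_iLarge_of_mem (hI : IsProperTransInvIdeal I) {A : Set G}
    (hA : A ∈ I) : ¬ ILarge I A := by
  rw [iLarge_iff]
  rintro ⟨F, hF, hcompl⟩
  refine hI.univ_notMem ?_
  rw [← Set.union_compl_self (F * A)]
  exact hI.isSetIdeal.2 _ (hI.isSetIdeal.finite_mul_mem hI.isTransInv hF hA) _ hcompl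

theorem IsProperTransInvIdeal.not_iSmall_of_iLarge (hI : IsProperTransInvIdeal I) (h0 : ∅ ∈ I)
    {A : Set G} (hA : ILarge I A) : ¬ ISmall I A := fun hSmall =>
  hI.not_iLarge_of_mem h0 (by simpa using hSmall A hA)

/-- For a translation invariant ideal `I` containing `∅`, the translation invariant ideal
generated by `I` and `A`. -/
def adjoinTranslates (I : Set (Set G)) (A : Set G) : Set (Set G) :=
  {S | ∃ F : Set G, F.Finite ∧ ∃ B ∈ I, S ⊆ F * A ∪ B}

theorem subset_adjoinTranslates (A : Set G) : I ⊆ adjoinTranslates I A :=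
  fun B hB => ⟨∅, Set.finite_empty, B, hB, by simp⟩

theorem mem_adjoinTranslates (h0 : ∅ ∈ I) (A : Set G) : A ∈ adjoinTranslates I A :=
  ⟨{1}, Set.finite_singleton 1, ∅, h0, by simp⟩

theorem isSetIdeal_adjoinTranslates (hI : IsSetIdeal I) (A : Set G) :
    IsSetIdeal (adjoinTranslates I A) := by
  refine ⟨?_, ?_⟩
  · rintro s t hst ⟨F, hF, B, hB, ht⟩
    exact ⟨F, hF, B, hB, hst.trans ht⟩
  · rintro s ⟨F₁, hF₁, B₁, hB₁, hs⟩ t ⟨F₂, hF₂, B₂, hB₂, ht⟩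
    refine ⟨F₁ ∪ F₂, hF₁.union hF₂, B₁ ∪ B₂, hI.2 _ hB₁ _ hB₂, ?_⟩
    rw [Set.union_mul]
    exact (Set.union_subset_union hs ht).trans (Set.union_union_union_comm _ _ _ _).le

theorem isTransInv_adjoinTranslates (hT : IsTransInv I) (A : Set G) :
    IsTransInv (adjoinTranslates I A) := by
  rintro s ⟨F, hF, B, hB, hs⟩ g
  refine ⟨g • F, hF.smul_set, g • B, hT B hB g, ?_⟩
  rw [smul_mul_assoc, ← Set.smul_set_union]
  exact Set.smul_set_mono hs

theorem IsSetIdeal.iLarge_of_univ_mem_adjoinTranslates (hI : IsSetIdeal I) {A : Set G}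
    (h : Set.univ ∈ adjoinTranslates I A) : ILarge I A := by
  obtain ⟨F, hF, B, hB, hcover⟩ := h
  refine iLarge_iff.mpr ⟨F, hF, hI.1 _ B ?_ hB⟩
  rw [Set.compl_subset_iff_union]
  exact Set.univ_subset_iff.mp hcover

theorem IsMaximalTransInvIdeal.iLarge_of_notMem (hI : IsMaximalTransInvIdeal I) {A : Set G}
    (hA : A ∉ I) : ILarge I A := by
  by_contra hNotLarge
  have hJ : IsProperTransInvIdeal (adjoinTranslates I A) :=
    ⟨isSetIdeal_adjoinTranslates hI.1.isSetIdeal A, isTransInv_adjoinTranslates hI.1.isTransInv A,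
      fun h => hNotLarge (hI.1.isSetIdeal.iLarge_of_univ_mem_adjoinTranslates h)⟩
  have hJI : adjoinTranslates I A = I := hI.2 _ hJ (subset_adjoinTranslates A)
  exact hA (hJI ▸ mem_adjoinTranslates hI.empty_mem A)

end

theorem maximal_ideal_small_mem_and_partition_general {G : Type*} [Group G]
    (Istar : Set (Set G))
    (hIdeal : IsSetIdeal Istar) (hTrans : IsTransInv Istar)
    (hProper : Set.univ ∉ Istar)
    (hMax : ∀ J : Set (Set G), (IsSetIdeal J ∧ IsTransInv J ∧ Set.univ ∉ J) →
      Istar ⊆ J → J = Istar) :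
    (∀ A : Set G, ISmall Istar A → A ∈ Istar) ∧
      (∀ A : Set G, A ∈ Istar ↔ ¬ ILarge Istar A) := by
  have hI : IsMaximalTransInvIdeal Istar := ⟨⟨hIdeal, hTrans, hProper⟩, hMax⟩
  refine ⟨fun A hSmall => ?_, fun A => ?_⟩
  · by_contra hA
    exact hI.1.not_iSmall_of_iLarge hI.empty_mem (hI.iLarge_of_notMem hA) hSmall
  · exact ⟨hI.1.not_iLarge_of_mem, not_imp_comm.mp hI.iLarge_of_notMem⟩

/-- For a maximal proper translation invariant ideal `I*`, every `I*`-small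
set belongs to `I*`, and the power set of `G` is partitioned into `I*` and the
family of `I*`-large sets. -/
theorem maximal_ideal_small_mem_and_partition {G : Type*} [Group G] [Infinite G]
    (Istar : Set (Set G))
    (hIdeal : IsSetIdeal Istar) (hTrans : IsTransInv Istar)
    (hProper : Set.univ ∉ Istar)
    (hMax : ∀ J : Set (Set G), (IsSetIdeal J ∧ IsTransInv J ∧ Set.univ ∉ J) →
      Istar ⊆ J → J = Istar) :
    (∀ A : Set G, ISmall Istar A → A ∈ Istar) ∧
      (∀ A : Set G, A ∈ Istar ↔ ¬ ILarge Istar A) :=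
  maximal_ideal_small_mem_and_partition_general Istar hIdeal hTrans hProper hMax
end
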